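/- arXiv:math/0108145 — 3 statements merged into one kernel-verified Lean document; each statement's English description precedes it below -/
import Mathlib

section
/- Let f = ∑_{k≥0} a_k X^k ∈ ℂ[[X]] be of Gevrey class (i.e., f ∈ 𝒢) with nonzero constant coefficient a_0 ≠ 0. Then f is invertible in ℂ[[X]] and its inverse again lies in 𝒢. In other words, every element of 𝒢 with nonzero constant term is a unit of the subring 𝒢. -/
/-!
Let `b = f⁻¹`. Comparing coefficients in `f * b = 1` gives `a₀ bₙ₊₁ = -∑_{i + j = n} aᵢ₊₁ bⱼ`,
and since `i! j! ≤ (i + j)!` the Borel weights `‖bₙ‖ tⁿ / n!` are controlled by those of `f`.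
Once `t` is so small that `∑_{k ≥ 1} ‖aₖ‖ tᵏ / k! ≤ ‖a₀‖` (shrinking the radius by a factor
`q ≤ 1` shrinks this tail by at least the factor `q`), strong induction bounds every weight of
`b` at `t` by `‖a₀‖⁻¹`, and bounded weights at `t` are summable at `t / 2`.
-/

/-- A formal power series `f = ∑ aₖ Xᵏ ∈ ℂ[[X]]` is of *Gevrey class* if there is `r > 0`
such that `∑ (‖aₖ‖/k!)·rᵏ` is summable (the model of `ℂ{{∂ₜ⁻¹}}`). -/
def GevreyClass (f : PowerSeries ℂ) : Prop :=
  ∃ r : ℝ, 0 < r ∧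
    Summable fun k : ℕ => ‖PowerSeries.coeff k f‖ / (Nat.factorial k : ℝ) * r ^ k

open Finset
open scoped Nat PowerSeries

namespace PowerSeries

theorem constantCoeff_mul_coeff_succ_of_mul_eq_one {R : Type*} [CommRing R] {f g : R⟦X⟧}
    (h : f * g = 1) (n : ℕ) :
    constantCoeff f * coeff (n + 1) g = -∑ p ∈ antidiagonal n, coeff (p.1 + 1) f * coeff p.2 g := by
  have hcoeff := congrArg (coeff (n + 1)) h
  rw [coeff_mul, Nat.sum_antidiagonal_succ, coeff_one, if_neg n.succ_ne_zero,
    coeff_zero_eq_constantCoeff_apply] at hcoeff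
  linear_combination hcoeff

variable {𝕜 : Type*} [NormedField 𝕜]

/-- `GevreyClass f` unfolds to `∃ r > 0, Summable (borelTerm f r)`. -/
noncomputable def borelTerm (f : 𝕜⟦X⟧) (r : ℝ) (k : ℕ) : ℝ :=
  ‖coeff k f‖ / k ! * r ^ k

theorem borelTerm_nonneg (f : 𝕜⟦X⟧) {r : ℝ} (hr : 0 ≤ r) (k : ℕ) : 0 ≤ borelTerm f r k := by
  unfold borelTerm
  positivity

theorem borelTerm_mul_radius (f : 𝕜⟦X⟧) (q r : ℝ) (k : ℕ) :
    borelTerm f (q * r) k = q ^ k * borelTerm f r k := by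
  simp only [borelTerm, mul_pow]
  ring

theorem norm_coeff_mul_norm_coeff_le_borelTerm_mul (f g : 𝕜⟦X⟧) {t : ℝ} (ht : 0 ≤ t) (i j : ℕ) :
    ‖coeff i f‖ * ‖coeff j g‖ / (i + j)! * t ^ (i + j) ≤ borelTerm f t i * borelTerm g t j := by
  have hfact : (i ! * j ! : ℝ) ≤ (i + j)! := by
    exact_mod_cast
      Nat.le_of_dvd (Nat.factorial_pos _) (Nat.factorial_mul_factorial_dvd_factorial_add i j)
  calc ‖coeff i f‖ * ‖coeff j g‖ / (i + j)! * t ^ (i + j)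
      = ‖coeff i f‖ * t ^ i * (‖coeff j g‖ * t ^ j) / (i + j)! := by ring
    _ ≤ ‖coeff i f‖ * t ^ i * (‖coeff j g‖ * t ^ j) / (i ! * j !) := by gcongr
    _ = borelTerm f t i * borelTerm g t j := by
      simp only [borelTerm]
      ring

theorem summable_borelTerm_mul_radius_of_le {f : 𝕜⟦X⟧} {q t C : ℝ} (hq₀ : 0 ≤ q) (hq₁ : q < 1)
    (ht : 0 ≤ t) (hC : ∀ k, borelTerm f t k ≤ C) : Summable (borelTerm f (q * t)) := by
  refine .of_nonneg_of_le (borelTerm_nonneg f (by positivity)) (fun k => ?_)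
    ((summable_geometric_of_lt_one hq₀ hq₁).mul_left C)
  rw [borelTerm_mul_radius, mul_comm]
  gcongr
  exact hC k

theorem exists_pos_sum_borelTerm_succ_le {f : 𝕜⟦X⟧} {r ε : ℝ} (hr : 0 < r)
    (hf : Summable (borelTerm f r)) (hε : 0 < ε) :
    ∃ t, 0 < t ∧ ∀ n, ∑ k ∈ range n, borelTerm f t (k + 1) ≤ ε := by
  set S := ∑' k, borelTerm f r k
  have hS : 0 ≤ S := tsum_nonneg (borelTerm_nonneg f hr.le)
  set q := ε / (S + ε)
  have hq₀ : 0 < q := by positivity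
  have hq₁ : q ≤ 1 := (div_le_one (by positivity)).2 (by linarith)
  have hqS : q * S ≤ ε := by
    rw [div_mul_eq_mul_div, div_le_iff₀ (by positivity)]
    nlinarith
  refine ⟨q * r, by positivity, fun n => ?_⟩
  have hpartial : ∑ k ∈ range n, borelTerm f r (k + 1) ≤ S :=
    calc ∑ k ∈ range n, borelTerm f r (k + 1)
        ≤ ∑ k ∈ range (n + 1), borelTerm f r k := by
          rw [sum_range_succ']
          linarith [borelTerm_nonneg f hr.le 0]
      _ ≤ S := hf.sum_le_tsum _ fun k _ => borelTerm_nonneg f hr.le k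
  calc ∑ k ∈ range n, borelTerm f (q * r) (k + 1)
      ≤ ∑ k ∈ range n, q * borelTerm f r (k + 1) := by
        gcongr with k
        rw [borelTerm_mul_radius]
        exact mul_le_mul_of_nonneg_right (pow_le_of_le_one hq₀.le hq₁ k.succ_ne_zero)
          (borelTerm_nonneg f hr.le _)
    _ = q * ∑ k ∈ range n, borelTerm f r (k + 1) := (mul_sum _ _ _).symm
    _ ≤ q * S := by gcongr
    _ ≤ ε := hqS

theorem borelTerm_inv_le {f : 𝕜⟦X⟧} (h₀ : constantCoeff f ≠ 0) {t : ℝ} (ht : 0 ≤ t)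
    (htail : ∀ n, ∑ k ∈ range n, borelTerm f t (k + 1) ≤ ‖constantCoeff f‖) (n : ℕ) :
    borelTerm f⁻¹ t n ≤ ‖constantCoeff f‖⁻¹ := by
  set c := ‖constantCoeff f‖
  have hc : 0 < c := norm_pos_iff.2 h₀
  induction n using Nat.strong_induction_on with | _ n ih => ?_
  rcases n with _ | n
  · simp [borelTerm, c]
  refine le_of_mul_le_mul_left ?_ hc
  calc c * borelTerm f⁻¹ t (n + 1)
      = ‖∑ p ∈ antidiagonal n, coeff (p.1 + 1) f * coeff p.2 f⁻¹‖ / (n + 1)! * t ^ (n + 1) := by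
        rw [← norm_neg, ← constantCoeff_mul_coeff_succ_of_mul_eq_one
          (PowerSeries.mul_inv_cancel f h₀), norm_mul, borelTerm]
        ring
    _ ≤ ∑ p ∈ antidiagonal n, ‖coeff (p.1 + 1) f‖ * ‖coeff p.2 f⁻¹‖ / (n + 1)! * t ^ (n + 1) := by
        rw [← sum_mul, ← sum_div]
        gcongr
        exact norm_sum_le_of_le _ fun p _ => (norm_mul _ _).le
    _ ≤ ∑ p ∈ antidiagonal n, borelTerm f t (p.1 + 1) * c⁻¹ := by
        refine sum_le_sum fun p hp => ?_
        have hp' : p.1 + 1 + p.2 = n + 1 := by rw [add_right_comm, mem_antidiagonal.1 hp]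
        rw [← hp']
        refine (norm_coeff_mul_norm_coeff_le_borelTerm_mul f f⁻¹ ht _ _).trans ?_
        exact mul_le_mul_of_nonneg_left (ih p.2 (by omega)) (borelTerm_nonneg f ht _)
    _ = (∑ k ∈ range (n + 1), borelTerm f t (k + 1)) * c⁻¹ := by
        rw [Nat.sum_antidiagonal_eq_sum_range_succ (fun i _ => borelTerm f t (i + 1) * c⁻¹),
          sum_mul]
    _ ≤ c * c⁻¹ := by gcongr; exact htail _

end PowerSeries

open PowerSeries in
/-- Every Gevrey-class power series with nonzero constant coefficient
is invertible in `ℂ[[X]]`, with Gevrey-class inverse; i.e. it is a unit of `𝒢`. -/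
theorem gevreyClass_isUnit_of_constantCoeff_ne_zero
    (f : PowerSeries ℂ) (hf : GevreyClass f)
    (h0 : PowerSeries.constantCoeff f ≠ 0) :
    ∃ g : PowerSeries ℂ, GevreyClass g ∧ f * g = 1 ∧ g * f = 1 := by
  obtain ⟨r, hr, hsum⟩ := hf
  obtain ⟨t, ht, htail⟩ := exists_pos_sum_borelTerm_succ_le hr hsum (norm_pos_iff.2 h0)
  have hbound := borelTerm_inv_le h0 ht.le htail
  refine ⟨f⁻¹, ⟨2⁻¹ * t, by positivity, ?_⟩, PowerSeries.mul_inv_cancel f h0,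
    PowerSeries.inv_mul_cancel f h0⟩
  exact summable_borelTerm_mul_radius_of_le (by norm_num) (by norm_num) ht.le hbound
end

section
/- The ring 𝒢 of Gevrey-class formal power series (the model of the ring ℂ{{∂ₜ⁻¹}} of microdifferential operators with constant coefficients) is a discrete valuation ring: it is a local integral domain that is a principal ideal ring, with maximal ideal generated by X, and every nonzero element of 𝒢 can be written uniquely as X^n·u with n ∈ ℕ and u a unit of 𝒢. -/
/-!
Gevrey class means `‖aₖ‖ / k! ≤ C ρᵏ` for some `C` and `ρ`. Since `i! j! ≤ (i + j)!`, the weights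
`‖aₖ‖ / k!` of a product are dominated by the convolution of the weights of the factors, so such
bounds survive products, and also inversion: the recursion `a₀ bₙ₊₁ = -∑ aᵢ₊₁ bⱼ` for the
coefficients of `f⁻¹` propagates a geometric bound by induction. Dividing by `X` costs only a
factor `k + 1 ≤ 2ᵏ`. Hence the Gevrey series form a subring of the discrete valuation ring `ℂ⟦X⟧`
that contains `X`, is closed under division by `X` and contains the inverses of its units in
`ℂ⟦X⟧`; such a subring inherits the factorisation `f = Xⁿ u`.
-/

open PowerSeries Finset
open scoped Nat

section SubringOfDVR

variable {R : Type*}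

theorem Subring.irreducible_of_irreducible_coe [Ring R] {S : Subring R}
    (hunit : ∀ x : S, IsUnit (x : R) → IsUnit x) {x : S} (hx : Irreducible (x : R)) :
    Irreducible x :=
  ⟨fun h => hx.not_isUnit (h.map S.subtype),
    fun a b hab => (hx.isUnit_or_isUnit (congrArg Subtype.val hab)).imp (hunit a) (hunit b)⟩

theorem Subring.hasUnitMulPowIrreducibleFactorization [CommRing R] [IsDomain R]
    [IsDiscreteValuationRing R] {S : Subring R} (hunit : ∀ x : S, IsUnit (x : R) → IsUnit x)
    {ϖ : S} (hϖ : Irreducible (ϖ : R)) (hdiv : ∀ y : R, (ϖ : R) * y ∈ S → y ∈ S) :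
    IsDiscreteValuationRing.HasUnitMulPowIrreducibleFactorization S := by
  have hdiv_pow : ∀ (n : ℕ) (y : R), (ϖ : R) ^ n * y ∈ S → y ∈ S := by
    intro n
    induction n with
    | zero => simp
    | succ n ih => exact fun y hy => hdiv y (ih _ (by rwa [pow_succ, mul_assoc] at hy))
  refine ⟨ϖ, Subring.irreducible_of_irreducible_coe hunit hϖ, fun {x} hx => ?_⟩
  obtain ⟨n, u, hu⟩ :=
    IsDiscreteValuationRing.eq_unit_mul_pow_irreducible (x := (x : R)) (by simpa using hx) hϖ
  have hu_mem : (u : R) ∈ S := hdiv_pow n u (by rw [mul_comm, ← hu]; exact x.2)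
  obtain ⟨v, hv⟩ := hunit ⟨u, hu_mem⟩ u.isUnit
  exact ⟨n, v, Subtype.ext (by simp [hv, hu, mul_comm])⟩

end SubringOfDVR

theorem mul_div_factorial_add_le {x y : ℝ} (hx : 0 ≤ x) (hy : 0 ≤ y) (i j : ℕ) :
    x * y / (i + j)! ≤ x / i ! * (y / j !) := by
  rw [div_mul_div_comm]
  gcongr
  exact_mod_cast Nat.le_of_dvd (Nat.factorial_pos _)
    (Nat.factorial_mul_factorial_dvd_factorial_add i j)

theorem norm_sum_mul_div_factorial_le {R ι : Type*} [SeminormedRing R] (s : Finset ι)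
    (u v : ι → R) (i j : ι → ℕ) {k : ℕ} (hk : ∀ p ∈ s, i p + j p = k) :
    ‖∑ p ∈ s, u p * v p‖ / k ! ≤ ∑ p ∈ s, ‖u p‖ / (i p)! * (‖v p‖ / (j p)!) := by
  calc ‖∑ p ∈ s, u p * v p‖ / k !
      ≤ (∑ p ∈ s, ‖u p‖ * ‖v p‖) / k ! := by
        gcongr
        exact (norm_sum_le _ _).trans (sum_le_sum fun p _ => norm_mul_le _ _)
    _ = ∑ p ∈ s, ‖u p‖ * ‖v p‖ / (i p + j p)! := by
        rw [sum_div]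
        exact sum_congr rfl fun p hp => by rw [hk p hp]
    _ ≤ _ := sum_le_sum fun p _ => mul_div_factorial_add_le (norm_nonneg _) (norm_nonneg _) _ _

theorem sum_antidiagonal_pow_mul_pow_le {x y : ℝ} (hx : 0 ≤ x) (hxy : 2 * x ≤ y) (n : ℕ) :
    ∑ p ∈ antidiagonal n, x ^ p.1 * y ^ p.2 ≤ 2 * y ^ n := by
  induction n with
  | zero => norm_num
  | succ n ih =>
    rw [Nat.sum_antidiagonal_succ]
    simp only [pow_succ', pow_zero, one_mul, mul_assoc, ← mul_sum]
    have hyn : 0 ≤ y ^ n := pow_nonneg (by linarith) n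
    nlinarith [mul_le_mul_of_nonneg_left ih hx, mul_le_mul_of_nonneg_right hxy hyn]

-- `2ρ(1 + CM)` dominates both `2ρ`, as the geometric sum needs, and `2CMρ`, which closes the
-- induction.
theorem le_mul_pow_of_le_sum_antidiagonal {α β : ℕ → ℝ} {C M ρ : ℝ} (hC : 0 ≤ C) (hM : 0 ≤ M)
    (hρ : 0 ≤ ρ) (hα_nonneg : ∀ i, 0 ≤ α i) (hα : ∀ i, α i ≤ C * ρ ^ i) (hβ_zero : β 0 ≤ M)
    (hβ_succ : ∀ n, β (n + 1) ≤ M * ∑ p ∈ antidiagonal n, α (p.1 + 1) * β p.2) (k : ℕ) :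
    β k ≤ M * (2 * ρ * (1 + C * M)) ^ k := by
  set D := 2 * ρ * (1 + C * M)
  have hCM : 0 ≤ C * M := mul_nonneg hC hM
  have hD_nonneg : 0 ≤ D := by positivity
  induction k using Nat.strong_induction_on with
  | _ k ih =>
  cases k with
  | zero => simpa using hβ_zero
  | succ n =>
    calc β (n + 1) ≤ M * ∑ p ∈ antidiagonal n, α (p.1 + 1) * β p.2 := hβ_succ n
      _ ≤ M * ∑ p ∈ antidiagonal n, C * ρ ^ (p.1 + 1) * (M * D ^ p.2) := by
          refine mul_le_mul_of_nonneg_left (sum_le_sum fun p hp => ?_) hM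
          exact (mul_le_mul_of_nonneg_left (ih _ (Nat.antidiagonal.snd_lt hp)) (hα_nonneg _)).trans
            (mul_le_mul_of_nonneg_right (hα _) (by positivity))
      _ = M * (C * M * ρ * ∑ p ∈ antidiagonal n, ρ ^ p.1 * D ^ p.2) := by
          simp only [mul_sum]
          exact sum_congr rfl fun p _ => by ring
      _ ≤ M * (C * M * ρ * (2 * D ^ n)) := by
          gcongr
          exact sum_antidiagonal_pow_mul_pow_le hρ (by nlinarith) n
      _ = M * (2 * (C * M * ρ) * D ^ n) := by ring
      _ ≤ M * (D * D ^ n) := by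
          gcongr
          nlinarith
      _ = M * D ^ (n + 1) := by ring

theorem norm_coeff_succ_div_factorial_le_of_mul_eq_one {𝕜 : Type*} [NormedField 𝕜]
    {f g : 𝕜⟦X⟧} (h : f * g = 1) (n : ℕ) :
    ‖coeff (n + 1) g‖ / (n + 1)! ≤ ‖constantCoeff f‖⁻¹ *
      ∑ p ∈ antidiagonal n, ‖coeff (p.1 + 1) f‖ / (p.1 + 1)! * (‖coeff p.2 g‖ / p.2 !) := by
  have h0 : constantCoeff f ≠ 0 :=
    left_ne_zero_of_mul_eq_one (b := constantCoeff g) (by rw [← map_mul, h, map_one])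
  have hrec : constantCoeff f * coeff (n + 1) g =
      -∑ p ∈ antidiagonal n, coeff (p.1 + 1) f * coeff p.2 g := by
    have := congrArg (coeff (n + 1)) h
    rw [coeff_mul, Nat.sum_antidiagonal_succ, coeff_one, if_neg n.succ_ne_zero] at this
    simpa [eq_neg_iff_add_eq_zero] using this
  have hnorm : ‖∑ p ∈ antidiagonal n, coeff (p.1 + 1) f * coeff p.2 g‖ =
      ‖constantCoeff f‖ * ‖coeff (n + 1) g‖ := by
    rw [← norm_mul, hrec, norm_neg]
  rw [← inv_mul_cancel_left₀ (norm_ne_zero_iff.mpr h0) ‖coeff (n + 1) g‖, ← hnorm, mul_div_assoc]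
  gcongr
  exact norm_sum_mul_div_factorial_le (antidiagonal n) (fun p => coeff (p.1 + 1) f)
    (fun p => coeff p.2 g) (fun p => p.1 + 1) Prod.snd fun p hp => by
      have := HasAntidiagonal.mem_antidiagonal.mp hp
      omega

theorem gevreyClass_iff_exists_bound {f : ℂ⟦X⟧} :
    GevreyClass f ↔ ∃ C ρ : ℝ, 0 ≤ C ∧ 0 < ρ ∧ ∀ k, ‖coeff k f‖ / k ! ≤ C * ρ ^ k := by
  constructor
  · rintro ⟨r, hr, hsum⟩
    refine ⟨∑' k, ‖coeff k f‖ / k ! * r ^ k, r⁻¹, tsum_nonneg fun k => by positivity,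
      inv_pos.mpr hr, fun k => ?_⟩
    rw [inv_pow, ← div_eq_mul_inv, le_div_iff₀ (by positivity)]
    exact hsum.le_tsum k fun _ _ => by positivity
  · rintro ⟨C, ρ, hC, hρ, hbound⟩
    refine ⟨(2 * ρ)⁻¹, by positivity, summable_geometric_two.mul_left C |>.of_nonneg_of_le
      (fun k => by positivity) fun k => ?_⟩
    calc ‖coeff k f‖ / k ! * (2 * ρ)⁻¹ ^ k ≤ C * ρ ^ k * (2 * ρ)⁻¹ ^ k := by gcongr; exact hbound k
      _ = C * (1 / 2) ^ k := by rw [mul_assoc, ← mul_pow]; congr 2; field_simp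

namespace GevreyClass

theorem monomial (n : ℕ) (c : ℂ) : GevreyClass (monomial n c) :=
  ⟨1, one_pos, (hasSum_single n fun k hk => by simp [coeff_monomial, hk]).summable⟩

theorem neg {f : ℂ⟦X⟧} (hf : GevreyClass f) : GevreyClass (-f) := by
  simpa only [GevreyClass, map_neg, norm_neg] using hf

theorem add {f g : ℂ⟦X⟧} (hf : GevreyClass f) (hg : GevreyClass g) : GevreyClass (f + g) := by
  obtain ⟨C, ρ, hC, hρ, hf⟩ := gevreyClass_iff_exists_bound.mp hf
  obtain ⟨D, σ, hD, hσ, hg⟩ := gevreyClass_iff_exists_bound.mp hg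
  refine gevreyClass_iff_exists_bound.mpr
    ⟨C + D, max ρ σ, by positivity, lt_max_of_lt_left hρ, fun k => ?_⟩
  calc ‖coeff k (f + g)‖ / k ! ≤ ‖coeff k f‖ / k ! + ‖coeff k g‖ / k ! := by
        rw [map_add, ← add_div]
        gcongr
        exact norm_add_le _ _
    _ ≤ C * max ρ σ ^ k + D * max ρ σ ^ k := by
        gcongr
        · exact (hf k).trans (by gcongr; exact le_max_left _ _)
        · exact (hg k).trans (by gcongr; exact le_max_right _ _)
    _ = (C + D) * max ρ σ ^ k := by ring

theorem mul {f g : ℂ⟦X⟧} (hf : GevreyClass f) (hg : GevreyClass g) : GevreyClass (f * g) := by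
  obtain ⟨C, ρ, hC, hρ, hf⟩ := gevreyClass_iff_exists_bound.mp hf
  obtain ⟨D, σ, hD, hσ, hg⟩ := gevreyClass_iff_exists_bound.mp hg
  set τ := max ρ σ
  have hτ : 0 < τ := lt_max_of_lt_left hρ
  refine gevreyClass_iff_exists_bound.mpr
    ⟨C * D * 2, 2 * τ, by positivity, by positivity, fun k => ?_⟩
  calc ‖coeff k (f * g)‖ / k !
      ≤ ∑ p ∈ antidiagonal k, ‖coeff p.1 f‖ / p.1 ! * (‖coeff p.2 g‖ / p.2 !) := by
        rw [coeff_mul]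
        exact norm_sum_mul_div_factorial_le (antidiagonal k) (fun p => coeff p.1 f)
          (fun p => coeff p.2 g) Prod.fst Prod.snd fun _ => HasAntidiagonal.mem_antidiagonal.mp
    _ ≤ ∑ p ∈ antidiagonal k, C * τ ^ p.1 * (D * (2 * τ) ^ p.2) := by
        gcongr with p
        · exact (hf _).trans (by gcongr; exact le_max_left _ _)
        · exact (hg _).trans (by gcongr; linarith [le_max_right ρ σ])
    _ = C * D * ∑ p ∈ antidiagonal k, τ ^ p.1 * (2 * τ) ^ p.2 := by
        rw [mul_sum]
        exact sum_congr rfl fun p _ => by ring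
    _ ≤ C * D * 2 * (2 * τ) ^ k := by
        rw [mul_assoc (C * D)]
        gcongr
        exact sum_antidiagonal_pow_mul_pow_le hτ.le le_rfl k

theorem of_X_mul {g : ℂ⟦X⟧} (hg : GevreyClass (X * g)) : GevreyClass g := by
  obtain ⟨C, ρ, hC, hρ, hbound⟩ := gevreyClass_iff_exists_bound.mp hg
  refine gevreyClass_iff_exists_bound.mpr ⟨C * ρ, 2 * ρ, by positivity, by positivity, fun k => ?_⟩
  calc ‖coeff k g‖ / k ! = (k + 1) * (‖coeff (k + 1) (X * g)‖ / (k + 1)!) := by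
        rw [coeff_succ_X_mul, Nat.factorial_succ]
        push_cast
        field_simp
    _ ≤ 2 ^ k * (C * ρ ^ (k + 1)) := by
        gcongr
        · exact_mod_cast Nat.lt_two_pow_self
        · exact hbound (k + 1)
    _ = C * ρ * (2 * ρ) ^ k := by ring

theorem inv {f : ℂ⟦X⟧} (hf : GevreyClass f) (h0 : constantCoeff f ≠ 0) : GevreyClass f⁻¹ := by
  obtain ⟨C, ρ, hC, hρ, hbound⟩ := gevreyClass_iff_exists_bound.mp hf
  have hM : 0 ≤ ‖constantCoeff f‖⁻¹ := inv_nonneg.mpr (norm_nonneg _)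
  refine gevreyClass_iff_exists_bound.mpr ⟨_, _, hM, by positivity,
    le_mul_pow_of_le_sum_antidiagonal hC hM hρ.le (fun i => by positivity) hbound (by simp)
      (norm_coeff_succ_div_factorial_le_of_mul_eq_one (PowerSeries.mul_inv_cancel f h0))⟩

end GevreyClass

theorem gevreyClass_X : GevreyClass X := by
  simpa only [← X_eq] using GevreyClass.monomial 1 1

def gevreySubring : Subring ℂ⟦X⟧ where
  carrier := {f | GevreyClass f}
  zero_mem' := by simpa using GevreyClass.monomial 0 0
  one_mem' := by simpa using GevreyClass.monomial 0 1
  add_mem' := GevreyClass.add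
  mul_mem' := GevreyClass.mul
  neg_mem' := GevreyClass.neg

theorem gevreySubring.isUnit_of_isUnit_coe (f : gevreySubring) (hf : IsUnit (f : ℂ⟦X⟧)) :
    IsUnit f := by
  have h0 : constantCoeff (f : ℂ⟦X⟧) ≠ 0 := (isUnit_iff_constantCoeff.mp hf).ne_zero
  exact .of_mul_eq_one ⟨_, GevreyClass.inv f.2 h0⟩
    (Subtype.ext (PowerSeries.mul_inv_cancel _ h0))

/-- The ring `𝒢` of Gevrey-class formal power series (the model of the
ring `ℂ{{∂ₜ⁻¹}}` of microdifferential operators with constant coefficients) is a discrete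
valuation ring: a local principal ideal domain, with maximal ideal generated by `X`, and
every nonzero element is uniquely `Xⁿ·u` with `n ∈ ℕ` and `u` a unit. -/
theorem gevreyClass_discreteValuationRing :
    ∃ S : Subring (PowerSeries ℂ), (∀ f : PowerSeries ℂ, f ∈ S ↔ GevreyClass f) ∧
      ∃ hX : PowerSeries.X ∈ S,
        ∃ hdvr : IsDiscreteValuationRing ↥S,
          (@IsLocalRing.maximalIdeal ↥S _ hdvr.toIsLocalRing =
            Ideal.span {(⟨PowerSeries.X, hX⟩ : ↥S)}) ∧
          ∀ f : ↥S, f ≠ 0 →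
            ∃! nu : ℕ × (↥S)ˣ,
              f = (⟨PowerSeries.X, hX⟩ : ↥S) ^ nu.1 * (nu.2 : ↥S) := by
  set ϖ : gevreySubring := ⟨X, gevreyClass_X⟩
  have hϖ : Irreducible ϖ :=
    Subring.irreducible_of_irreducible_coe gevreySubring.isUnit_of_isUnit_coe X_irreducible
  have hdvr : IsDiscreteValuationRing gevreySubring :=
    .ofHasUnitMulPowIrreducibleFactorization <|
      Subring.hasUnitMulPowIrreducibleFactorization gevreySubring.isUnit_of_isUnit_coe
        (ϖ := ϖ) X_irreducible fun _ => GevreyClass.of_X_mul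
  refine ⟨gevreySubring, fun _ => Iff.rfl, gevreyClass_X, hdvr,
    (IsDiscreteValuationRing.irreducible_iff_uniformizer ϖ).mp hϖ, fun f hf => ?_⟩
  obtain ⟨n, u, rfl⟩ := IsDiscreteValuationRing.eq_unit_mul_pow_irreducible hf hϖ
  refine ⟨(n, u), mul_comm _ _, fun ⟨m, v⟩ h => ?_⟩
  have h' : (v : gevreySubring) * ϖ ^ m = u * ϖ ^ n := by rw [mul_comm]; exact h.symm
  obtain rfl := IsDiscreteValuationRing.unit_mul_pow_congr_pow hϖ hϖ v u m n h'
  rw [IsDiscreteValuationRing.unit_mul_pow_congr_unit hϖ v u m m h']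
end

section
/- The set ℂ{X} of formal power series ∑_{k≥0} a_k X^k ∈ ℂ[[X]] for which there exists r > 0 such that ∑_{k≥0} ‖a_k‖·r^k is summable (i.e., power series with positive radius of convergence) is a subring of ℂ[[X]], and this ring of convergent power series is a discrete valuation ring: a local principal ideal domain whose maximal ideal is generated by X, every nonzero element being X^n·u with u a unit. -/
/-!
Write `‖f‖ᵣ = ∑ ‖aₖ‖ rᵏ`. Sums and Cauchy products of series with `‖·‖ᵣ < ∞` again have
`‖·‖ᵣ < ∞`, so convergent series form a subring. The substance is that a convergent `f` with
`a₀ ≠ 0` has a convergent inverse `∑ bₖ Xᵏ`: shrinking `r` makes `∑_{k ≥ 1} ‖aₖ‖ rᵏ ≤ ‖a₀‖`, and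
then the recursion `a₀ bₙ = -∑_{i=1}^{n} aᵢ b_{n-i}` shows by strong induction that
`‖bₙ‖ rⁿ ≤ ‖b₀‖`, so `f⁻¹` converges on the smaller radius `r / 2`. Hence the units of `ℂ{X}` are
the series with nonzero constant term, every nonzero `f` is `X^(ord f)` times such a unit, and
`ℂ{X}` is a discrete valuation ring with uniformizer `X`.
-/

/-- A formal power series `f = ∑ aₖ Xᵏ ∈ ℂ[[X]]` is *convergent* (has positive radius of
convergence) if there is `r > 0` such that `∑ ‖aₖ‖·rᵏ` is summable (the model of `ℂ{t}`). -/
def ConvergentSeries (f : PowerSeries ℂ) : Prop :=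
  ∃ r : ℝ, 0 < r ∧ Summable fun k : ℕ => ‖PowerSeries.coeff k f‖ * r ^ k

open Finset PowerSeries
open scoped Polynomial

namespace PowerSeries

variable {𝕜 : Type*}

def AbsSummableAt [NormedRing 𝕜] (f : 𝕜⟦X⟧) (r : ℝ) : Prop :=
  Summable fun k => ‖coeff k f‖ * r ^ k

section NormedRing

variable [NormedRing 𝕜] {f g : 𝕜⟦X⟧} {r s : ℝ}

theorem absSummableAt_coe (p : 𝕜[X]) (r : ℝ) : AbsSummableAt (p : 𝕜⟦X⟧) r :=
  summable_of_ne_finset_zero (s := p.support) fun k hk => by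
    simp [Polynomial.coeff_coe, Polynomial.notMem_support_iff.1 hk]

namespace AbsSummableAt

theorem mono (hf : AbsSummableAt f r) (hs : 0 ≤ s) (hsr : s ≤ r) : AbsSummableAt f s :=
  hf.of_nonneg_of_le (fun k => by positivity) fun k => by gcongr

theorem neg (hf : AbsSummableAt f r) : AbsSummableAt (-f) r := by
  simpa [AbsSummableAt] using hf

theorem add (hf : AbsSummableAt f r) (hg : AbsSummableAt g r) (hr : 0 ≤ r) :
    AbsSummableAt (f + g) r :=
  (Summable.add hf hg).of_nonneg_of_le (fun k => by positivity) fun k => by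
    rw [map_add, ← add_mul]
    gcongr
    exact norm_add_le _ _

theorem mul (hf : AbsSummableAt f r) (hg : AbsSummableAt g r) (hr : 0 ≤ r) :
    AbsSummableAt (f * g) r := by
  refine (summable_sum_mul_antidiagonal_of_summable_mul
    (Summable.mul_of_nonneg hf hg (fun k => by positivity) fun k => by positivity)).of_nonneg_of_le
    (fun n => by positivity) fun n => ?_
  calc ‖coeff n (f * g)‖ * r ^ n
      ≤ (∑ kl ∈ antidiagonal n, ‖coeff kl.1 f‖ * ‖coeff kl.2 g‖) * r ^ n := by
        rw [coeff_mul]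
        gcongr
        exact (norm_sum_le _ _).trans (sum_le_sum fun kl _ => norm_mul_le _ _)
    _ = ∑ kl ∈ antidiagonal n, ‖coeff kl.1 f‖ * r ^ kl.1 * (‖coeff kl.2 g‖ * r ^ kl.2) := by
        rw [sum_mul]
        refine sum_congr rfl fun kl hkl => ?_
        rw [← mem_antidiagonal.1 hkl, pow_add]
        ring

theorem of_X_pow_mul {n : ℕ} (h : AbsSummableAt (X ^ n * f) r) (hr : 0 < r) :
    AbsSummableAt f r := by
  refine (((summable_nat_add_iff n).2 h).mul_left (r ^ n)⁻¹).congr fun k => ?_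
  rw [coeff_X_pow_mul, pow_add]
  field_simp

theorem of_norm_coeff_mul_pow_le {C : ℝ} (h : ∀ n, ‖coeff n f‖ * r ^ n ≤ C) (hs : 0 ≤ s)
    (hsr : s < r) : AbsSummableAt f s := by
  have hr : 0 < r := hs.trans_lt hsr
  refine ((summable_geometric_of_lt_one (div_nonneg hs hr.le) ((div_lt_one hr).2 hsr)).mul_left
    C).of_nonneg_of_le (fun n => by positivity) fun n => ?_
  calc ‖coeff n f‖ * s ^ n = ‖coeff n f‖ * r ^ n * (s / r) ^ n := by
        rw [div_pow, mul_assoc, mul_div_cancel₀ _ (pow_pos hr n).ne']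
    _ ≤ C * (s / r) ^ n := by gcongr; exact h n

theorem exists_sum_norm_coeff_succ_mul_pow_le (hf : AbsSummableAt f r) (hr : 0 < r) {ε : ℝ}
    (hε : 0 < ε) : ∃ s, 0 < s ∧ ∀ n, ∑ i ∈ range n, ‖coeff (i + 1) f‖ * s ^ (i + 1) ≤ ε := by
  have htail : Summable fun k => ‖coeff (k + 1) f‖ * r ^ (k + 1) := (summable_nat_add_iff 1).2 hf
  set T := ∑' k, ‖coeff (k + 1) f‖ * r ^ (k + 1)
  have hT : 0 ≤ T := tsum_nonneg fun k => by positivity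
  set c := ε / (T + ε)
  have hc : 0 < c := by positivity
  have hc1 : c ≤ 1 := (div_le_one (by positivity)).2 (by linarith)
  refine ⟨c * r, by positivity, fun n => ?_⟩
  calc ∑ i ∈ range n, ‖coeff (i + 1) f‖ * (c * r) ^ (i + 1)
      ≤ ∑ i ∈ range n, c * (‖coeff (i + 1) f‖ * r ^ (i + 1)) := sum_le_sum fun i _ => by
        rw [mul_pow, mul_left_comm]
        gcongr
        exact pow_le_of_le_one hc.le hc1 i.succ_ne_zero
    _ ≤ c * T := by
        rw [← mul_sum]
        gcongr
        exact htail.sum_le_tsum _ fun k _ => by positivity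
    _ ≤ ε := by
        rw [div_mul_eq_mul_div, div_le_iff₀ (by positivity)]
        nlinarith

end AbsSummableAt

end NormedRing

section NormedField

variable [NormedField 𝕜] {f : 𝕜⟦X⟧} {r s : ℝ}

theorem norm_coeff_inv_mul_pow_le (h0 : constantCoeff f ≠ 0) (hs : 0 ≤ s)
    (hsmall : ∀ n, ∑ i ∈ range n, ‖coeff (i + 1) f‖ * s ^ (i + 1) ≤ ‖constantCoeff f‖) (n : ℕ) :
    ‖coeff n f⁻¹‖ * s ^ n ≤ ‖constantCoeff f‖⁻¹ := by
  have ha0 : 0 < ‖constantCoeff f‖ := norm_pos_iff.2 h0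
  induction n using Nat.strong_induction_on with
  | _ n ih =>
  rcases n with _ | n
  · simp
  have hrec : constantCoeff f * coeff (n + 1) f⁻¹ =
      -∑ i ∈ range (n + 1), coeff (i + 1) f * coeff (n - i) f⁻¹ := by
    have h := congrArg (coeff (n + 1)) (PowerSeries.mul_inv_cancel f h0)
    rw [coeff_mul, Nat.sum_antidiagonal_eq_sum_range_succ_mk, sum_range_succ'] at h
    simpa [eq_neg_iff_add_eq_zero, add_comm] using h
  refine le_of_mul_le_mul_left ?_ ha0
  calc ‖constantCoeff f‖ * (‖coeff (n + 1) f⁻¹‖ * s ^ (n + 1))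
      ≤ (∑ i ∈ range (n + 1), ‖coeff (i + 1) f‖ * ‖coeff (n - i) f⁻¹‖) * s ^ (n + 1) := by
        rw [← mul_assoc, ← norm_mul, hrec, norm_neg]
        gcongr
        exact (norm_sum_le _ _).trans (sum_le_sum fun i _ => (norm_mul _ _).le)
    _ = ∑ i ∈ range (n + 1),
          ‖coeff (i + 1) f‖ * s ^ (i + 1) * (‖coeff (n - i) f⁻¹‖ * s ^ (n - i)) := by
        rw [sum_mul]
        refine sum_congr rfl fun i hi => ?_
        rw [show n + 1 = i + 1 + (n - i) by have := mem_range.1 hi; omega, pow_add]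
        ring
    _ ≤ ∑ i ∈ range (n + 1), ‖coeff (i + 1) f‖ * s ^ (i + 1) * ‖constantCoeff f‖⁻¹ :=
        sum_le_sum fun i _ => by gcongr; exact ih _ (by omega)
    _ ≤ ‖constantCoeff f‖ * ‖constantCoeff f‖⁻¹ := by
        rw [← sum_mul]
        gcongr
        exact hsmall _

theorem AbsSummableAt.inv (hf : AbsSummableAt f r) (hr : 0 < r) (h0 : constantCoeff f ≠ 0) :
    ∃ s, 0 < s ∧ AbsSummableAt f⁻¹ s := by
  obtain ⟨s, hs, hsmall⟩ := hf.exists_sum_norm_coeff_succ_mul_pow_le hr (norm_pos_iff.2 h0)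
  exact ⟨s / 2, by positivity, .of_norm_coeff_mul_pow_le
    (norm_coeff_inv_mul_pow_le h0 hs.le hsmall) (by positivity) (by linarith)⟩

end NormedField

end PowerSeries

section ConvergentSeries

variable {f g : ℂ⟦X⟧}

theorem ConvergentSeries.exists_absSummableAt (hf : ConvergentSeries f) (hg : ConvergentSeries g) :
    ∃ r, 0 < r ∧ AbsSummableAt f r ∧ AbsSummableAt g r := by
  obtain ⟨r, hr, hf⟩ := hf
  obtain ⟨s, hs, hg⟩ := hg
  have hrs : 0 < min r s := lt_min hr hs
  exact ⟨min r s, hrs, AbsSummableAt.mono hf hrs.le (min_le_left r s),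
    AbsSummableAt.mono hg hrs.le (min_le_right r s)⟩

theorem convergentSeries_coe (p : ℂ[X]) : ConvergentSeries p :=
  ⟨1, one_pos, absSummableAt_coe p 1⟩

def convergentSeriesSubring : Subring ℂ⟦X⟧ where
  carrier := {f | ConvergentSeries f}
  zero_mem' := by simpa using convergentSeries_coe 0
  one_mem' := by simpa using convergentSeries_coe 1
  neg_mem' := fun ⟨r, hr, hf⟩ => ⟨r, hr, AbsSummableAt.neg hf⟩
  add_mem' hf hg :=
    let ⟨r, hr, hf, hg⟩ := hf.exists_absSummableAt hg
    ⟨r, hr, hf.add hg hr.le⟩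
  mul_mem' hf hg :=
    let ⟨r, hr, hf, hg⟩ := hf.exists_absSummableAt hg
    ⟨r, hr, hf.mul hg hr.le⟩

namespace convergentSeriesSubring

theorem X_mem : X ∈ convergentSeriesSubring :=
  Polynomial.coe_X (R := ℂ) ▸ convergentSeries_coe Polynomial.X

theorem isUnit_iff {f : convergentSeriesSubring} :
    IsUnit f ↔ constantCoeff (f : ℂ⟦X⟧) ≠ 0 := by
  refine ⟨fun h => (isUnit_iff_constantCoeff.1 (h.map convergentSeriesSubring.subtype)).ne_zero,
    fun h0 => ?_⟩
  obtain ⟨r, hr, hf⟩ := f.2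
  obtain ⟨s, hs, hinv⟩ := AbsSummableAt.inv hf hr h0
  exact IsUnit.of_mul_eq_one (⟨_, s, hs, hinv⟩ : convergentSeriesSubring) (Subtype.ext (PowerSeries.mul_inv_cancel _ h0))

theorem irreducible_X : Irreducible (⟨X, X_mem⟩ : convergentSeriesSubring) := by
  refine ⟨fun h => by simpa using isUnit_iff.1 h, fun a b hab => ?_⟩
  simp only [isUnit_iff, ← isUnit_iff_ne_zero, ← isUnit_iff_constantCoeff]
  exact X_irreducible.isUnit_or_isUnit (congrArg Subtype.val hab)

theorem exists_eq_X_pow_mul_unit {f : convergentSeriesSubring} (hf : f ≠ 0) :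
    ∃ (n : ℕ) (u : convergentSeriesSubringˣ), f = ⟨X, X_mem⟩ ^ n * u := by
  obtain ⟨r, hr, hsum⟩ := f.2
  have hg : divXPowOrder (f : ℂ⟦X⟧) ∈ convergentSeriesSubring :=
    ⟨r, hr, AbsSummableAt.of_X_pow_mul (by rwa [X_pow_order_mul_divXPowOrder]) hr⟩
  have hu : IsUnit (⟨_, hg⟩ : convergentSeriesSubring) :=
    isUnit_iff.2 (constantCoeff_divXPowOrder_eq_zero_iff.not.2 (by exact_mod_cast hf))
  exact ⟨_, hu.unit, Subtype.ext (by simpa using X_pow_order_mul_divXPowOrder.symm)⟩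

instance : IsDiscreteValuationRing convergentSeriesSubring :=
  .ofHasUnitMulPowIrreducibleFactorization ⟨_, irreducible_X, fun hf =>
    let ⟨n, u, h⟩ := exists_eq_X_pow_mul_unit hf
    ⟨n, u, h.symm⟩⟩

end convergentSeriesSubring

end ConvergentSeries

/-- The set `ℂ{X}` of convergent power series is a subring of `ℂ[[X]]`,
and this ring is a discrete valuation ring: a local principal ideal domain whose maximal
ideal is generated by `X`, every nonzero element being `Xⁿ·u` with `u` a unit. -/
theorem convergentSeries_subring_discreteValuationRing :
    ∃ S : Subring (PowerSeries ℂ), (∀ f : PowerSeries ℂ, f ∈ S ↔ ConvergentSeries f) ∧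
      ∃ hX : PowerSeries.X ∈ S,
        ∃ hdvr : IsDiscreteValuationRing ↥S,
          (@IsLocalRing.maximalIdeal ↥S _ hdvr.toIsLocalRing =
            Ideal.span {(⟨PowerSeries.X, hX⟩ : ↥S)}) ∧
          ∀ f : ↥S, f ≠ 0 →
            ∃ (n : ℕ) (u : (↥S)ˣ),
              f = (⟨PowerSeries.X, hX⟩ : ↥S) ^ n * (u : ↥S) := by
  open convergentSeriesSubring in
  exact ⟨convergentSeriesSubring, fun _ => Iff.rfl, X_mem, inferInstance,
    (IsDiscreteValuationRing.irreducible_iff_uniformizer _).1 irreducible_X,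
    fun _ => exists_eq_X_pow_mul_unit⟩
end
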